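/- arXiv:0807.3519 — 3 statements merged into one kernel-verified Lean document; each statement's English description precedes it below -/
import Mathlib

section
/- A word w does not lie in the support of the free Lie algebra L_K(A) (i.e., w appears with coefficient 0 in every Lie polynomial over K) if and only if l*(w) = 0. -/
open MonoidAlgebra

attribute [local instance 100] LieRing.ofAssociativeRing

/-- The word `w` viewed as a monomial in the free associative algebra `K⟨A⟩`. -/
noncomputable def word (K : Type*) [CommRing K] {A : Type*} (w : List A) :
    MonoidAlgebra K (FreeMonoid A) :=
  MonoidAlgebra.single (FreeMonoid.ofList w) 1

/-- The adjoint `l*` of the left-normed Lie bracketing, defined by the recursion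
`l*(ε) = 0`, `l*(a) = a`, `l*(aub) = l*(au)·b − l*(ub)·a`. -/
noncomputable def lstar (K : Type*) [CommRing K] {A : Type*} :
    List A → MonoidAlgebra K (FreeMonoid A)
  | [] => 0
  | [a] => word K [a]
  | a :: b :: r =>
      lstar K (a :: (b :: r).dropLast) * word K [(b :: r).getLast (by simp)]
        - lstar K (b :: r) * word K [a]
  termination_by w => w.length
  decreasing_by
    · simp [List.length_dropLast]
    · simp

/-- The free Lie algebra `L_K(A)`: the Lie subalgebra of `K⟨A⟩` generated by the letters. -/
noncomputable def freeLie (K : Type*) [CommRing K] (A : Type*) :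
    LieSubalgebra K (MonoidAlgebra K (FreeMonoid A)) :=
  LieSubalgebra.lieSpan K _ {P | ∃ a : A, P = word K [a]}

/-!
`l*` is the adjoint of `l`: the coefficient of `u` in `l*(w)` is the coefficient of `w` in `l(u)`.
By induction on `w` this comes down to comparing `l*(aub) = l*(au)·b − l*(ub)·a` with
`l(u'c) = l(u')·c − c·l(u')`. Hence `l*(w) = 0` iff `w` has coefficient zero in every `l(u)`, and
by the Jacobi identity the `l(u)` span `L_K(A)` as a `K`-module.
-/

section LeftNormedBracket

variable {L ι : Type*} [LieRing L] (f : ι → L)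

def leftNormedBracket : List ι → L
  | [] => 0
  | i :: is => is.foldl (fun x j => ⁅x, f j⁆) (f i)

@[simp]
lemma leftNormedBracket_nil : leftNormedBracket f [] = 0 := rfl

@[simp]
lemma leftNormedBracket_singleton (i : ι) : leftNormedBracket f [i] = f i := rfl

lemma leftNormedBracket_concat {u : List ι} (hu : u ≠ []) (i : ι) :
    leftNormedBracket f (u ++ [i]) = ⁅leftNormedBracket f u, f i⁆ := by
  obtain ⟨j, u, rfl⟩ := List.exists_cons_of_ne_nil hu
  simp [leftNormedBracket]

variable (R : Type*) [CommRing R] [LieAlgebra R L]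

lemma leftNormedBracket_mem_lieSpan (u : List ι) :
    leftNormedBracket f u ∈ LieSubalgebra.lieSpan R L (Set.range f) := by
  induction u using List.reverseRecOn with
  | nil => exact zero_mem _
  | append_singleton u i ih =>
    have hi : f i ∈ LieSubalgebra.lieSpan R L (Set.range f) :=
      LieSubalgebra.subset_lieSpan ⟨i, rfl⟩
    rcases eq_or_ne u [] with rfl | hu
    · simpa using hi
    · rw [leftNormedBracket_concat f hu]
      exact LieSubalgebra.lie_mem _ ih hi

lemma lie_apply_mem_span_leftNormedBracket {x : L}
    (hx : x ∈ Submodule.span R (Set.range (leftNormedBracket f))) (i : ι) :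
    ⁅x, f i⁆ ∈ Submodule.span R (Set.range (leftNormedBracket f)) := by
  induction hx using Submodule.span_induction with
  | mem _ hy =>
    obtain ⟨u, rfl⟩ := hy
    rcases eq_or_ne u [] with rfl | hu
    · simp
    · exact Submodule.subset_span ⟨u ++ [i], leftNormedBracket_concat f hu i⟩
  | zero => simp
  | add y z _ _ hy hz => simpa only [add_lie] using add_mem hy hz
  | smul r y _ hy => simpa only [smul_lie] using Submodule.smul_mem _ r hy

lemma lie_leftNormedBracket_mem_span_leftNormedBracket {x : L}
    (hx : x ∈ Submodule.span R (Set.range (leftNormedBracket f))) (v : List ι) :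
    ⁅x, leftNormedBracket f v⁆ ∈ Submodule.span R (Set.range (leftNormedBracket f)) := by
  induction v using List.reverseRecOn generalizing x with
  | nil => simp
  | append_singleton v i ih =>
    rcases eq_or_ne v [] with rfl | hv
    · simpa using lie_apply_mem_span_leftNormedBracket f R hx i
    · rw [leftNormedBracket_concat f hv, leibniz_lie, ← lie_skew (leftNormedBracket f v)]
      exact add_mem (lie_apply_mem_span_leftNormedBracket f R (ih hx) i)
        (neg_mem (ih (lie_apply_mem_span_leftNormedBracket f R hx i)))

lemma lie_mem_span_leftNormedBracket {x y : L}
    (hx : x ∈ Submodule.span R (Set.range (leftNormedBracket f)))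
    (hy : y ∈ Submodule.span R (Set.range (leftNormedBracket f))) :
    ⁅x, y⁆ ∈ Submodule.span R (Set.range (leftNormedBracket f)) := by
  induction hy using Submodule.span_induction with
  | mem _ hz =>
    obtain ⟨v, rfl⟩ := hz
    exact lie_leftNormedBracket_mem_span_leftNormedBracket f R hx v
  | zero => simp
  | add y z _ _ hy hz => simpa only [lie_add] using add_mem hy hz
  | smul r y _ hy => simpa only [lie_smul] using Submodule.smul_mem _ r hy

theorem LieSubalgebra.toSubmodule_lieSpan_range_eq_span_leftNormedBracket :
    (LieSubalgebra.lieSpan R L (Set.range f)).toSubmodule =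
      Submodule.span R (Set.range (leftNormedBracket f)) := by
  refine le_antisymm ?_ (Submodule.span_le.mpr ?_)
  · have hS : LieSubalgebra.lieSpan R L (Set.range f) ≤
        { Submodule.span R (Set.range (leftNormedBracket f)) with
          lie_mem' := lie_mem_span_leftNormedBracket f R } :=
      LieSubalgebra.lieSpan_le.mpr
        (Set.range_subset_iff.mpr fun i => Submodule.subset_span ⟨[i], rfl⟩)
    exact hS
  · rintro _ ⟨u, rfl⟩
    exact leftNormedBracket_mem_lieSpan f R u

end LeftNormedBracket

lemma toSubmodule_freeLie {K A : Type*} [CommRing K] :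
    (freeLie K A).toSubmodule = Submodule.span K (Set.range (leftNormedBracket (word K [·]))) := by
  have hgen : {P | ∃ a : A, P = word K [a]} = Set.range (word K [·]) := by
    ext P
    simp [eq_comm]
  rw [freeLie, hgen, LieSubalgebra.toSubmodule_lieSpan_range_eq_span_leftNormedBracket]

section FreeAssocAlgebra

variable {K A : Type*} [CommRing K]

lemma coeff_mul_word_nil (P : MonoidAlgebra K (FreeMonoid A)) (c : A) :
    (P * word K [c]).coeff (FreeMonoid.ofList []) = 0 :=
  coeff_mul_single_of_forall_mul_ne _ _ fun d h => by
    simpa using congrArg FreeMonoid.toList h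

lemma coeff_word_mul_nil (P : MonoidAlgebra K (FreeMonoid A)) (c : A) :
    (word K [c] * P).coeff (FreeMonoid.ofList []) = 0 :=
  coeff_single_mul_of_forall_mul_ne _ _ fun d h => by
    simpa using congrArg FreeMonoid.toList h

variable [DecidableEq A]

lemma coeff_word (v u : List A) :
    (word K v).coeff (FreeMonoid.ofList u) = if v = u then 1 else 0 := by
  classical
  simp [word, Finsupp.single_apply]

lemma coeff_mul_word_concat (P : MonoidAlgebra K (FreeMonoid A)) (c d : A) (v : List A) :
    (P * word K [c]).coeff (FreeMonoid.ofList (v ++ [d])) =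
      if d = c then P.coeff (FreeMonoid.ofList v) else 0 := by
  split_ifs with h
  · subst h
    refine (coeff_mul_single_eq_coeff_mul _ fun m _ => ?_).trans (mul_one _)
    rw [FreeMonoid.ofList_append, (mul_left_injective _).eq_iff]
  · refine coeff_mul_single_of_forall_mul_ne _ _ fun m hm => h ?_
    simpa using (congrArg (fun m => m.toList.getLast?) hm).symm

lemma coeff_word_mul_cons (P : MonoidAlgebra K (FreeMonoid A)) (c d : A) (v : List A) :
    (word K [c] * P).coeff (FreeMonoid.ofList (d :: v)) =
      if d = c then P.coeff (FreeMonoid.ofList v) else 0 := by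
  split_ifs with h
  · subst h
    refine (coeff_single_mul_eq_mul_coeff _ fun m _ => ?_).trans (one_mul _)
    rw [FreeMonoid.ofList_cons d v, ← FreeMonoid.ofList_singleton, (mul_right_injective _).eq_iff]
  · refine coeff_single_mul_of_forall_mul_ne _ _ fun m hm => h ?_
    simpa using (congrArg (fun m => m.toList.head?) hm).symm

end FreeAssocAlgebra

section Adjoint

variable {K A : Type*} [CommRing K]

lemma lstar_cons_concat (a d : A) (v : List A) :
    lstar K (a :: (v ++ [d])) =
      lstar K (a :: v) * word K [d] - lstar K (v ++ [d]) * word K [a] := by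
  obtain ⟨b, r, hbr⟩ := List.exists_cons_of_ne_nil (List.concat_ne_nil d v)
  rw [hbr, lstar]
  simp only [← hbr, List.dropLast_concat, List.getLast_concat]

lemma coeff_leftNormedBracket_nil (u : List A) :
    (leftNormedBracket (word K [·]) u).coeff (FreeMonoid.ofList []) = 0 := by
  classical
  rcases u.eq_nil_or_concat' with rfl | ⟨u, c, rfl⟩
  · rfl
  rcases eq_or_ne u [] with rfl | hu
  · rw [List.nil_append, leftNormedBracket_singleton, coeff_word, if_neg (List.cons_ne_nil _ _)]
  · rw [leftNormedBracket_concat _ hu, Ring.lie_def, coeff_sub, Finsupp.sub_apply,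
      coeff_mul_word_nil, coeff_word_mul_nil, sub_zero]

lemma coeff_lstar_cons_concat [DecidableEq A] {a d : A} {v : List A}
    (ih₁ : ∀ u : List A, (lstar K (a :: v)).coeff (FreeMonoid.ofList u) =
      (leftNormedBracket (word K [·]) u).coeff (FreeMonoid.ofList (a :: v)))
    (ih₂ : ∀ u : List A, (lstar K (v ++ [d])).coeff (FreeMonoid.ofList u) =
      (leftNormedBracket (word K [·]) u).coeff (FreeMonoid.ofList (v ++ [d])))
    (u : List A) :
    (lstar K (a :: (v ++ [d]))).coeff (FreeMonoid.ofList u) =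
      (leftNormedBracket (word K [·]) u).coeff (FreeMonoid.ofList (a :: (v ++ [d]))) := by
  rw [lstar_cons_concat, coeff_sub, Finsupp.sub_apply]
  rcases u.eq_nil_or_concat' with rfl | ⟨u, c, rfl⟩
  · rw [coeff_mul_word_nil, coeff_mul_word_nil, sub_zero, leftNormedBracket_nil, coeff_zero,
      Finsupp.zero_apply]
  rw [coeff_mul_word_concat, coeff_mul_word_concat, ih₁, ih₂]
  rcases eq_or_ne u [] with rfl | hu
  · rw [List.nil_append, leftNormedBracket_singleton, coeff_word]
    simp
  · rw [leftNormedBracket_concat _ hu, Ring.lie_def, coeff_sub, Finsupp.sub_apply,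
      coeff_word_mul_cons, ← List.cons_append, coeff_mul_word_concat]
    simp only [eq_comm]

theorem coeff_lstar_eq_coeff_leftNormedBracket (w u : List A) :
    (lstar K w).coeff (FreeMonoid.ofList u) =
      (leftNormedBracket (word K [·]) u).coeff (FreeMonoid.ofList w) := by
  classical
  induction w using lstar.induct generalizing u with
  | case1 =>
    rw [lstar, coeff_leftNormedBracket_nil, coeff_zero, Finsupp.zero_apply]
  | case2 a =>
    rw [lstar]
    rcases u.eq_nil_or_concat' with rfl | ⟨u, c, rfl⟩
    · rw [coeff_word, if_neg (List.cons_ne_nil _ _), leftNormedBracket_nil, coeff_zero,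
        Finsupp.zero_apply]
    rcases eq_or_ne u [] with rfl | hu
    · rw [List.nil_append, leftNormedBracket_singleton, coeff_word, coeff_word]
      simp only [eq_comm]
    · rw [coeff_word, leftNormedBracket_concat _ hu, Ring.lie_def, coeff_sub, Finsupp.sub_apply,
        coeff_word_mul_cons, ← List.nil_append [a], coeff_mul_word_concat, sub_self, if_neg]
      intro h
      exact hu (by simpa using congrArg List.length h.symm)
  | case3 a b r ih₁ ih₂ =>
    obtain ⟨v, d, hvd⟩ := (b :: r).eq_nil_or_concat'.resolve_left (List.cons_ne_nil b r)
    rw [hvd, List.dropLast_concat] at ih₁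
    rw [hvd] at ih₂ ⊢
    exact coeff_lstar_cons_concat ih₁ ih₂ u

end Adjoint

theorem not_mem_support_iff_lstar_eq_zero_general {K : Type*} [CommRing K] {A : Type*}
    (w : List A) :
    (∀ Q ∈ freeLie K A, Q.coeff (FreeMonoid.ofList w) = 0) ↔ lstar K w = 0 := by
  simp_rw [← LieSubalgebra.mem_toSubmodule, toSubmodule_freeLie]
  constructor
  · intro h
    ext u
    rw [← FreeMonoid.ofList_toList u, coeff_lstar_eq_coeff_leftNormedBracket]
    exact h _ (Submodule.subset_span ⟨_, rfl⟩)
  · intro h Q hQ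
    have hker : Submodule.span K (Set.range (leftNormedBracket (word K [·]))) ≤
        LinearMap.ker
          (Finsupp.lapply (FreeMonoid.ofList w) ∘ₗ (coeffLinearEquiv K).toLinearMap) := by
      rw [Submodule.span_le]
      rintro _ ⟨u, rfl⟩
      simp [← coeff_lstar_eq_coeff_leftNormedBracket, h]
    exact hker hQ

/-- a word `w` does not lie in the support of `L_K(A)`
(its coefficient in every Lie polynomial is zero) iff `l*(w) = 0`. -/
theorem not_mem_support_iff_lstar_eq_zero {K : Type*} [CommRing K] {A : Type*} [Fintype A]
    (w : List A) :
    (∀ Q ∈ freeLie K A, Q.coeff (FreeMonoid.ofList w) = 0) ↔ lstar K w = 0 :=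
  not_mem_support_iff_lstar_eq_zero_general w
end

section
/- For any word w and any integer r with 1 ≤ r ≤ |w|, l*(w) = Σ over all factorizations w = s u t with |u| = r of l*(u) · (−1)^{|s|} · (s̃ ⧢ t), where s̃ is the reversal of s and ⧢ denotes the shuffle product. -/
/-!
Downward induction on `r`: for `r = |w|` the sum is the single term `l*(w)`. To pass from `r + 1`
to `r`, expand each `l*(u)`, `|u| = r + 1`, by `l*(aub) = l*(au)b − l*(ub)a`, and each
`s̃ ⧢ t` by the shuffle recursion at the first letter of `s̃`, i.e. the letter just before `u`.
Both expansions produce the same two families of terms, in which a window of length `r` is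
followed by the letter just after it, resp. the letter just before it, placed in front of the
shuffle; the two sums therefore telescope.
-/

open MonoidAlgebra

/-- The shuffle product of two words, as an element of `K⟨A⟩`. -/
noncomputable def shuffle (K : Type*) [CommRing K] {A : Type*} :
    List A → List A → MonoidAlgebra K (FreeMonoid A)
  | [], v => word K v
  | u, [] => word K u
  | a :: u, b :: v =>
      word K [a] * shuffle K u (b :: v) + word K [b] * shuffle K (a :: u) v
  termination_by u v => u.length + v.length

section FactorExpansion

variable (K : Type*) [CommRing K] {A : Type*}

lemma reverse_take_succ {l : List A} {i : ℕ} (h : i < l.length) :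
    (l.take (i + 1)).reverse = (l[i]'h) :: (l.take i).reverse := by
  rw [List.take_add_one, List.getElem?_eq_getElem h, Option.toList_some, List.reverse_append]
  rfl

lemma word_nil : word K ([] : List A) = 1 := by
  simp [word, MonoidAlgebra.one_def]

lemma word_mul_word (u v : List A) : word K u * word K v = word K (u ++ v) := by
  simp [word, MonoidAlgebra.single_mul_single]

lemma shuffle_nil_left (v : List A) : shuffle K [] v = word K v := by
  cases v <;> simp [shuffle]

lemma shuffle_nil_right (u : List A) : shuffle K u [] = word K u := by
  cases u <;> simp [shuffle]

lemma shuffle_cons_cons (a b : A) (u v : List A) :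
    shuffle K (a :: u) (b :: v)
      = word K [a] * shuffle K u (b :: v) + word K [b] * shuffle K (a :: u) v := by
  rw [shuffle]

lemma lstar_cons_append_singleton (a b : A) (m : List A) :
    lstar K (a :: (m ++ [b]))
      = lstar K (a :: m) * word K [b] - lstar K (m ++ [b]) * word K [a] := by
  cases m with
  | nil =>
    conv_lhs => rw [List.nil_append, lstar]
    simp [lstar]
  | cons c m =>
    rw [List.cons_append, lstar]
    simp only [← List.cons_append, List.dropLast_concat, List.getLast_append_singleton]

/-- Here `(l.drop r).take 1` and `l.take 1` are the last and the first letter of `l.take (r + 1)`. -/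
lemma lstar_take_succ {r : ℕ} (hr : 1 ≤ r) {l : List A} (hl : r < l.length) :
    lstar K (l.take (r + 1))
      = lstar K (l.take r) * word K ((l.drop r).take 1)
        - lstar K ((l.drop 1).take r) * word K (l.take 1) := by
  obtain ⟨k, rfl⟩ : ∃ k, r = k + 1 := ⟨r - 1, by omega⟩
  obtain ⟨a, l, rfl⟩ : ∃ a l', l = a :: l' := List.exists_cons_of_length_pos (by omega)
  have hk : k < l.length := by simpa using hl
  have hsnoc : l.take (k + 1) = l.take k ++ [l[k]'hk] := by
    rw [List.take_add_one, List.getElem?_eq_getElem hk, Option.toList_some]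
  simp only [List.take_succ_cons, List.drop_succ_cons, List.drop_zero, List.take_zero, hsnoc,
    List.take_one_drop_eq_of_lt_length hk, List.get_eq_getElem]
  exact lstar_cons_append_singleton K a (l[k]'hk) (l.take k)

/-- The summand of the expansion for the factorization `w = s u t` with `|s| = i`, `|u| = r`. -/
noncomputable def factorTerm (w : List A) (r i : ℕ) : MonoidAlgebra K (FreeMonoid A) :=
  lstar K ((w.drop i).take r) *
    ((-1 : K) ^ i • shuffle K (w.take i).reverse (w.drop (i + r)))

noncomputable def factorSum (w : List A) (r : ℕ) : MonoidAlgebra K (FreeMonoid A) :=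
  ∑ i ∈ Finset.range (w.length - r + 1), factorTerm K w r i

/-- `factorTerm K w r i` with the letter `w[i+r]` following `u` moved from `t` to the front of
the shuffle; when `t` is empty, `take 1` gives the empty word and this is `factorTerm K w r i`. -/
noncomputable def factorTermNext (w : List A) (r i : ℕ) : MonoidAlgebra K (FreeMonoid A) :=
  lstar K ((w.drop i).take r) *
    ((-1 : K) ^ i • (word K ((w.drop (i + r)).take 1) *
      shuffle K (w.take i).reverse (w.drop (i + r + 1))))

/-- The window `u = w[i+1, i+r+1)` with the letter `w[i]` preceding it moved to the front of
the shuffle of `s̃ = (w.take i).reverse` and `t`. -/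
noncomputable def factorTermPrev (w : List A) (r i : ℕ) : MonoidAlgebra K (FreeMonoid A) :=
  lstar K ((w.drop (i + 1)).take r) *
    ((-1 : K) ^ i • (word K ((w.drop i).take 1) *
      shuffle K (w.take i).reverse (w.drop (i + r + 1))))

lemma factorTerm_succ {w : List A} {r i : ℕ} (hr : 1 ≤ r) (h : i + r < w.length) :
    factorTerm K w (r + 1) i = factorTermNext K w r i - factorTermPrev K w r i := by
  rw [factorTerm, lstar_take_succ K hr (by rw [List.length_drop]; omega)]
  simp only [factorTermNext, factorTermPrev, List.drop_drop, sub_mul, mul_assoc, mul_smul_comm,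
    smul_sub, ← add_assoc]

lemma factorTermNext_zero (w : List A) (r : ℕ) : factorTermNext K w r 0 = factorTerm K w r 0 := by
  simp only [factorTermNext, factorTerm, List.take_zero, List.reverse_nil, shuffle_nil_left,
    word_mul_word, Nat.zero_add]
  rw [← List.drop_drop, List.take_append_drop]

lemma factorTerm_succ_index {w : List A} {r i : ℕ} (h : i + r + 1 < w.length) :
    factorTerm K w r (i + 1) = factorTermNext K w r (i + 1) - factorTermPrev K w r i := by
  have hi : i < w.length := by omega
  rw [factorTerm, factorTermNext, factorTermPrev, reverse_take_succ hi,
    Nat.add_right_comm i 1 r, List.drop_eq_getElem_cons h, shuffle_cons_cons,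
    ← List.drop_eq_getElem_cons h, List.take_one_drop_eq_of_lt_length hi,
    List.take_one_drop_eq_of_lt_length h]
  rw [pow_succ, mul_neg_one, neg_smul, neg_smul, smul_add, mul_neg, mul_neg, mul_add,
    List.get_eq_getElem, List.get_eq_getElem]
  abel

lemma factorTerm_succ_index_of_eq {w : List A} {r i : ℕ} (h : i + r + 1 = w.length) :
    factorTerm K w r (i + 1) = -factorTermPrev K w r i := by
  have hi : i < w.length := by omega
  rw [factorTerm, factorTermPrev, reverse_take_succ hi, Nat.add_right_comm i 1 r,
    List.drop_eq_nil_of_le h.ge, shuffle_nil_right, shuffle_nil_right, word_mul_word,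
    List.take_one_drop_eq_of_lt_length hi]
  simp only [pow_succ, neg_smul, mul_neg, mul_one, List.get_eq_getElem]
  rfl

lemma factorSum_succ {w : List A} {r : ℕ} (hr : 1 ≤ r) (h : r < w.length) :
    factorSum K w (r + 1) = factorSum K w r := by
  obtain ⟨d, hd⟩ : ∃ d, w.length = d + r + 1 := ⟨w.length - r - 1, by omega⟩
  rw [factorSum, factorSum, hd, show d + r + 1 - (r + 1) = d by omega,
    show d + r + 1 - r = d + 1 by omega]
  -- The `factorTermNext` and `factorTermPrev` sums telescope against `factorTerm K w r (i + 1)`.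
  rw [Finset.sum_congr rfl fun i hi => factorTerm_succ K hr (by simp at hi; omega),
    Finset.sum_sub_distrib, Finset.sum_range_succ (fun i => factorTermPrev K w r i),
    Finset.sum_range_succ' (fun i => factorTermNext K w r i),
    Finset.sum_range_succ' (fun i => factorTerm K w r i), Finset.sum_range_succ,
    factorTermNext_zero, factorTerm_succ_index_of_eq K hd.symm,
    Finset.sum_congr rfl fun i hi => factorTerm_succ_index K (by simp at hi; omega),
    Finset.sum_sub_distrib]
  abel

lemma factorSum_of_length_le {w : List A} {r : ℕ} (h : w.length ≤ r) :
    factorSum K w r = lstar K w := by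
  simp only [factorSum, Nat.sub_eq_zero_of_le h, Finset.sum_range_one, factorTerm, List.drop_zero,
    List.take_zero, List.reverse_nil, Nat.zero_add, List.drop_eq_nil_of_le h, shuffle_nil_left,
    word_nil, pow_zero, one_smul, mul_one, List.take_of_length_le h]

end FactorExpansion

theorem lstar_eq_sum_factors_general {K : Type*} [CommRing K] {A : Type*}
    (w : List A) (r : ℕ) (hr1 : 1 ≤ r) :
    lstar K w = ∑ i ∈ Finset.range (w.length - r + 1),
      lstar K ((w.drop i).take r) *
        ((-1 : K) ^ i • shuffle K (w.take i).reverse (w.drop (i + r))) := by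
  change lstar K w = factorSum K w r
  induction hd : w.length - r generalizing r with
  | zero => exact (factorSum_of_length_le K (by omega)).symm
  | succ d ih => rw [← factorSum_succ K hr1 (by omega), ih (r + 1) (by omega) (by omega)]

/-- for `1 ≤ r ≤ |w|`,
`l*(w) = Σ_{w = sut, |u| = r} l*(u) (−1)^{|s|} (s̃ ⧢ t)`. -/
theorem lstar_eq_sum_factors {K : Type*} [CommRing K] {A : Type*} [Fintype A]
    (w : List A) (r : ℕ) (hr1 : 1 ≤ r) (hr2 : r ≤ w.length) :
    lstar K w = ∑ i ∈ Finset.range (w.length - r + 1),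
      lstar K ((w.drop i).take r) *
        ((-1 : K) ^ i • shuffle K (w.take i).reverse (w.drop (i + r))) :=
  lstar_eq_sum_factors_general w r hr1
end

section
/- Over any commutative ring K with unity, if a word w satisfies l*(w) = 0 then the number of distinct letters occurring in w is at most ⌈|w|/2⌉. -/
/-!
Unfolding its recursion, `l*(w)` is a signed sum over the ways of peeling the letters of `w` off
its two ends one at a time: each way contributes the last remaining letter followed by the peeled
letters in reverse order, with sign `(-1)^(number of letters taken from the left)`. For
`w = P a R` with `a` occurring once, the coefficient of `a (reverse P) R` is therefore `±` the
number of interleavings of `P` and `reverse R` spelling `(reverse R) P`. Apart from the obvious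
one, such an interleaving makes some nonempty prefix of `P` a rearrangement of the prefix of `R`
of the same length. If `w` has more than `⌈|w|/2⌉` distinct letters, some letter `a` occurring
once avoids this: otherwise the window following each such letter contains the first letter of
`w`, which then occurs too often.
-/

open MonoidAlgebra

section Coefficients

variable {K : Type*} [CommRing K] {A : Type*}

theorem coeff_mul_word_singleton [DecidableEq A] (f : MonoidAlgebra K (FreeMonoid A))
    (b z : A) (u : List A) :
    (f * word K [b]).coeff (FreeMonoid.ofList (u ++ [z])) =
      if b = z then f.coeff (FreeMonoid.ofList u) else 0 := by
  split_ifs with hbz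
  · subst hbz
    simp [word]
  · refine coeff_mul_single_of_forall_mul_ne _ _ fun d hd => hbz ?_
    simpa using congrArg (fun m => m.toList.getLast?) hd

theorem coeff_mul_word_singleton_one (f : MonoidAlgebra K (FreeMonoid A)) (b : A) :
    (f * word K [b]).coeff 1 = 0 :=
  coeff_mul_single_of_forall_mul_ne _ _ fun d hd => by
    simpa using congrArg (fun m => m.toList.length) hd

theorem lstar_of_two_le_length {w : List A} (hw : 2 ≤ w.length) :
    lstar K w = lstar K w.dropLast * word K [w.getLast (by grind)]
      - lstar K w.tail * word K [w.head (by grind)] := by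
  match w, hw with
  | a :: b :: r, _ => simp [lstar, List.dropLast_cons_of_ne_nil]

theorem coeff_lstar_one (w : List A) : (lstar K w).coeff 1 = 0 := by
  match w with
  | [] => simp [lstar]
  | [a] => simp [lstar, word]
  | a :: b :: r =>
    rw [lstar_of_two_le_length (by simp), coeff_sub, Finsupp.sub_apply,
      coeff_mul_word_singleton_one, coeff_mul_word_singleton_one, sub_zero]

theorem coeff_lstar_append_singleton [DecidableEq A] {w : List A} (hw : 2 ≤ w.length)
    (u : List A) (z : A) :
    (lstar K w).coeff (FreeMonoid.ofList (u ++ [z])) =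
      (if w.getLast? = some z then (lstar K w.dropLast).coeff (FreeMonoid.ofList u) else 0) -
        (if w.head? = some z then (lstar K w.tail).coeff (FreeMonoid.ofList u) else 0) := by
  have hne : w ≠ [] := List.ne_nil_of_length_pos (by omega)
  rw [lstar_of_two_le_length hw, coeff_sub, Finsupp.sub_apply, coeff_mul_word_singleton,
    coeff_mul_word_singleton]
  simp only [List.getLast?_eq_some_getLast hne, List.head?_eq_some_head hne, Option.some_inj]

end Coefficients

section ShuffleCount

open List

variable {A : Type*} [DecidableEq A]

/-- The number of ways to interleave `x` and `y` into `t`, counted by the choice of positions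
(so it can exceed one when letters repeat). -/
def shuffleCount : List A → List A → List A → ℕ
  | x, y, [] => if x = [] ∧ y = [] then 1 else 0
  | x, y, z :: t =>
      (if x.head? = some z then shuffleCount x.tail y t else 0) +
        (if y.head? = some z then shuffleCount x y.tail t else 0)

theorem shuffleCount_nil_nil (t : List A) : shuffleCount [] [] t = if t = [] then 1 else 0 := by
  cases t <;> simp [shuffleCount]

theorem shuffleCount_self_nil (x : List A) : shuffleCount x [] x = 1 := by
  induction x with
  | nil => simp [shuffleCount]
  | cons c x ih => simp [shuffleCount, ih]

theorem perm_of_shuffleCount_ne_zero {x y t : List A} (h : shuffleCount x y t ≠ 0) :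
    x ++ y ~ t := by
  induction t generalizing x y with
  | nil =>
    simp only [shuffleCount] at h
    split_ifs at h with hxy
    · simp [hxy.1, hxy.2]
    · exact absurd rfl h
  | cons z t ih =>
    simp only [shuffleCount, ne_eq, Nat.add_eq_zero_iff, not_and_or] at h
    rcases h with h | h
    · have hx : x.head? = some z := by by_contra hx; simp [hx] at h
      obtain ⟨x', rfl⟩ := List.head?_eq_some_iff.1 hx
      simp only [if_pos hx, List.tail_cons] at h
      exact (ih h).cons z
    · have hy : y.head? = some z := by by_contra hy; simp [hy] at h
      obtain ⟨y', rfl⟩ := List.head?_eq_some_iff.1 hy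
      simp only [if_pos hy, List.tail_cons] at h
      exact List.perm_middle.trans ((ih h).cons z)

/-- Here `d` letters of `p` and `e` letters of `r` have been placed inside the block `r`; for
`d > 0` completing the interleaving would make `p.take d` a rearrangement of the last `d` letters
of `r`. -/
theorem shuffleCount_drop_drop_append {p r : List A}
    (h : ∀ j, 0 < j → j ≤ p.length → j ≤ r.length → ¬ p.take j ~ r.drop (r.length - j))
    (d e : ℕ) (hd : d ≤ p.length) :
    shuffleCount (p.drop d) (r.drop e) (r.drop (d + e) ++ p) = if d = 0 then 1 else 0 := by
  induction hn : r.length - (d + e) generalizing d e with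
  | zero =>
    rw [List.drop_of_length_le (by omega : r.length ≤ d + e), List.nil_append]
    split_ifs with hd0
    · subst hd0
      rw [List.drop_of_length_le (by omega : r.length ≤ e)]
      exact shuffleCount_self_nil p
    · by_contra hne
      have hperm : p.drop d ++ r.drop e ~ p.drop d ++ p.take d :=
        (perm_of_shuffleCount_ne_zero hne).trans
          (by simpa using (List.perm_append_comm (l₁ := p.take d) (l₂ := p.drop d)))
      have hperm' := (List.perm_append_left_iff _).1 hperm
      have hlen := hperm'.length_eq
      simp only [List.length_drop, List.length_take] at hlen
      exact h d (by omega) hd (by omega)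
        (by rw [show r.length - d = e by omega]; exact hperm'.symm)
  | succ n ih =>
    obtain ⟨c, hc⟩ : ∃ c, r.drop (d + e) = c :: r.drop (d + e + 1) :=
      ⟨_, List.drop_eq_getElem_cons (by omega)⟩
    have hfirst : (if (p.drop d).head? = some c then
        shuffleCount (p.drop d).tail (r.drop e) (r.drop (d + e + 1) ++ p) else 0) = 0 := by
      split_ifs with hhead
      · have hdp : d < p.length := by
          by_contra hle
          simp [List.drop_of_length_le (by omega : p.length ≤ d)] at hhead
        rw [List.tail_drop, show d + e + 1 = d + 1 + e by omega, ih (d + 1) e (by omega) (by omega),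
          if_neg (by omega)]
      · rfl
    rw [hc, List.cons_append, shuffleCount, hfirst, zero_add, List.tail_drop,
      show d + e + 1 = d + (e + 1) by omega, ih d (e + 1) hd (by omega)]
    by_cases hd0 : d = 0
    · subst hd0
      rw [zero_add] at hc
      simp [hc]
    · simp [hd0]

theorem shuffleCount_append_eq_one {p r : List A}
    (h : ∀ j, 0 < j → j ≤ p.length → j ≤ r.length → ¬ p.take j ~ r.drop (r.length - j)) :
    shuffleCount p r (r ++ p) = 1 := by
  simpa using shuffleCount_drop_drop_append h 0 0 (Nat.zero_le _)

end ShuffleCount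

section Peeling

variable {K : Type*} [CommRing K] {A : Type*}

theorem getLast?_append_cons_reverse {P Q : List A} {a z : A} (hz : z ≠ a) :
    (P ++ a :: Q.reverse).getLast? = some z ↔ Q.head? = some z := by
  cases Q with
  | nil => simp [Ne.symm hz]
  | cons q Q =>
    rw [List.reverse_cons, ← List.cons_append, ← List.append_assoc, List.getLast?_concat]
    simp

theorem head?_append_cons {P R : List A} {a z : A} (hz : z ≠ a) :
    (P ++ a :: R).head? = some z ↔ P.head? = some z := by
  cases P with
  | nil => simp [Ne.symm hz]
  | cons p P => simp

theorem two_le_length_append_cons_reverse {P Q : List A} (a : A) (h : ¬(P = [] ∧ Q = [])) :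
    2 ≤ (P ++ a :: Q.reverse).length := by
  cases P <;> cases Q <;> simp_all; omega

theorem coeff_lstar_singleton [DecidableEq A] (a : A) (v : List A) :
    (lstar K [a]).coeff (FreeMonoid.ofList (a :: v)) = if v = [] then 1 else 0 := by
  cases v <;> simp [lstar, word, coeff_single]

variable [DecidableEq A]

theorem coeff_lstar_append_cons_reverse {a : A} {P Q : List A} (v : List A) (hP : a ∉ P)
    (hQ : a ∉ Q) (hv : a ∉ v) :
    (lstar K (P ++ a :: Q.reverse)).coeff (FreeMonoid.ofList (a :: v.reverse)) =
      (-1) ^ P.length * shuffleCount P Q v := by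
  induction v generalizing P Q with
  | nil =>
    by_cases hPQ : P = [] ∧ Q = []
    · obtain ⟨rfl, rfl⟩ := hPQ
      rw [List.nil_append, List.reverse_nil, coeff_lstar_singleton]
      simp [shuffleCount_nil_nil]
    rw [show a :: [].reverse = [] ++ [a] from rfl,
      coeff_lstar_append_singleton (two_le_length_append_cons_reverse a hPQ)]
    simp [coeff_lstar_one, shuffleCount, hPQ]
  | cons z v ih =>
    by_cases hPQ : P = [] ∧ Q = []
    · obtain ⟨rfl, rfl⟩ := hPQ
      rw [List.nil_append, List.reverse_nil, coeff_lstar_singleton]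
      simp [shuffleCount_nil_nil]
    have hza : z ≠ a := fun h => hv (h ▸ List.mem_cons_self)
    have hv' : a ∉ v := fun h => hv (List.mem_cons_of_mem z h)
    have hlast : (if Q.head? = some z then
        (lstar K (P ++ a :: Q.reverse).dropLast).coeff (FreeMonoid.ofList (a :: v.reverse))
        else 0) =
        (-1) ^ P.length * ((if Q.head? = some z then shuffleCount P Q.tail v else 0 : ℕ) : K) := by
      split_ifs with hq
      · obtain ⟨Q', rfl⟩ := List.head?_eq_some_iff.1 hq
        rw [List.reverse_cons, ← List.cons_append, ← List.append_assoc, List.dropLast_concat,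
          ih hP (fun h => hQ (List.mem_cons_of_mem z h)) hv', List.tail_cons]
      · simp
    have hfirst : (if P.head? = some z then
        (lstar K (P ++ a :: Q.reverse).tail).coeff (FreeMonoid.ofList (a :: v.reverse))
        else 0) =
        -(-1) ^ P.length * ((if P.head? = some z then shuffleCount P.tail Q v else 0 : ℕ) : K) := by
      split_ifs with hp
      · obtain ⟨P', rfl⟩ := List.head?_eq_some_iff.1 hp
        rw [List.cons_append, List.tail_cons, ih (fun h => hP (List.mem_cons_of_mem z h)) hQ hv',
          List.length_cons, List.tail_cons, pow_succ]
        ring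
      · simp
    rw [show a :: (z :: v).reverse = (a :: v.reverse) ++ [z] by simp,
      coeff_lstar_append_singleton (two_le_length_append_cons_reverse a hPQ)]
    simp only [getLast?_append_cons_reverse hza, head?_append_cons hza]
    rw [hlast, hfirst, shuffleCount]
    push_cast
    ring

end Peeling

theorem Finset.card_le_card_of_forall_exists_between {α : Type*} [LinearOrder α]
    {U X : Finset α} (h : ∀ i ∈ U, ∃ ℓ ∈ X, i < ℓ ∧ ∀ i' ∈ U, i < i' → ℓ < i') :
    U.card ≤ X.card := by
  choose! ψ hψX hψgt hψlt using h
  refine Finset.card_le_card_of_injOn ψ hψX fun i hi i' hi' hii' => ?_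
  by_contra hne
  rcases lt_or_gt_of_ne hne with hlt | hlt
  · exact ((hψlt i hi i' hi' hlt).trans (hψgt i' hi')).ne hii'
  · exact ((hψlt i' hi' i hi hlt).trans (hψgt i hi)).ne hii'.symm

section Combinatorics

open List

variable {A : Type*}

theorem mem_take_drop_iff {w : List A} {c : A} {i j : ℕ} :
    c ∈ (w.drop i).take j ↔ ∃ m, i ≤ m ∧ m < i + j ∧ w[m]? = some c := by
  simp only [List.mem_iff_getElem?, List.getElem?_take, List.getElem?_drop]
  constructor
  · rintro ⟨n, hn⟩
    split_ifs at hn with hnj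
    exact ⟨i + n, by omega, by omega, hn⟩
  · rintro ⟨m, him, hmj, hm⟩
    exact ⟨m - i, by rwa [if_pos (by omega), Nat.add_sub_cancel' him]⟩

theorem mem_take_iff_exists_getElem?_eq {w : List A} {c : A} {j : ℕ} :
    c ∈ w.take j ↔ ∃ m < j, w[m]? = some c := by
  simpa using mem_take_drop_iff (w := w) (c := c) (i := 0) (j := j)

theorem take_append_cons_drop_of_getElem?_eq {w : List A} {i : ℕ} {b : A} (h : w[i]? = some b) :
    w.take i ++ b :: w.drop (i + 1) = w := by
  obtain ⟨hi, rfl⟩ := List.getElem?_eq_some_iff.1 h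
  rw [← List.drop_eq_getElem_cons hi, List.take_append_drop]

variable [DecidableEq A]

theorem card_le_count_of_forall_getElem?_eq {w : List A} {x : A} {S : Finset ℕ}
    (hS : ∀ i ∈ S, w[i]? = some x) : S.card ≤ w.count x := by
  have hcount := Fin.card_filter_univ_eq_vector_get_eq_count x (⟨w, rfl⟩ : List.Vector A w.length)
  rw [List.Vector.toList_mk] at hcount
  rw [← hcount, ← Finset.card_map Fin.valEmbedding]
  refine Finset.card_le_card fun i hi => ?_
  obtain ⟨hi', hix⟩ := List.getElem?_eq_some_iff.1 (hS i hi)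
  exact Finset.mem_map.2
    ⟨⟨i, hi'⟩, Finset.mem_filter.2 ⟨Finset.mem_univ _, by simpa [List.Vector.get] using hix⟩, rfl⟩

theorem one_lt_count_of_getElem?_eq {w : List A} {c : A} {m m' : ℕ} (hmm' : m ≠ m')
    (hm : w[m]? = some c) (hm' : w[m']? = some c) : 1 < w.count c := by
  have := card_le_count_of_forall_getElem?_eq (w := w) (x := c) (S := {m, m'}) (by simp [hm, hm'])
  rwa [Finset.card_pair hmm'] at this

theorem two_mul_card_toFinset_le {w : List A} {x : A}
    (h : (w.toFinset.filter (w.count · = 1)).card + 1 ≤ w.count x) :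
    2 * w.toFinset.card ≤ w.length + 1 := by
  set T := w.toFinset.filter (w.count · = 1)
  have hx : x ∈ w.toFinset := List.mem_toFinset.2 (List.count_pos_iff.1 (by omega))
  have hx1 : w.count x ≠ 1 := fun hx1 => by
    have : 0 < T.card := Finset.card_pos.2 ⟨x, Finset.mem_filter.2 ⟨hx, hx1⟩⟩
    omega
  let f b := w.count b + if w.count b = 1 then 1 else 0
  have hsum : ∑ b ∈ w.toFinset, f b = w.length + T.card := by
    rw [Finset.sum_add_distrib, List.sum_toFinset_count_eq_length, Finset.sum_boole, Nat.cast_id]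
  have hrest : 2 * (w.toFinset.card - 1) ≤ ∑ b ∈ w.toFinset.erase x, f b := by
    rw [← Finset.card_erase_of_mem hx, mul_comm, ← smul_eq_mul]
    refine Finset.card_nsmul_le_sum _ _ _ fun b hb => ?_
    have := List.count_pos_iff.2 (List.mem_toFinset.1 (Finset.mem_of_mem_erase hb))
    simp only [f]
    split_ifs <;> omega
  have hfx : f x = w.count x := by simp [f, hx1]
  rw [← Finset.add_sum_erase _ _ hx, hfx] at hsum
  have : 0 < w.toFinset.card := Finset.card_pos.2 ⟨x, hx⟩
  omega

theorem card_filter_count_eq_one_add_one_le_count {w : List A} {x : A} (hx : w[0]? = some x)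
    (hwin : ∀ i b, w[i]? = some b → w.count b = 1 →
      ∃ j, 0 < j ∧ j ≤ i ∧ w.take j ~ (w.drop (i + 1)).take j) :
    (w.toFinset.filter (w.count · = 1)).card + 1 ≤ w.count x := by
  set T := w.toFinset.filter (w.count · = 1)
  set U := T.image w.idxOf
  set X := (Finset.range w.length).filter (w[·]? = some x)
  have hmemT : ∀ b ∈ T, b ∈ w ∧ w.count b = 1 := fun b hb => by simpa [T] using hb
  -- The window of `j` letters after a single letter contains `x` (as `w.take j` does) but, being a
  -- rearrangement of letters occurring earlier, no single letter.
  have hUX : ∀ i ∈ U, ∃ ℓ ∈ X.erase 0, i < ℓ ∧ ∀ i' ∈ U, i < i' → ℓ < i' := by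
    intro i hi
    obtain ⟨b, hbT, rfl⟩ := Finset.mem_image.1 hi
    obtain ⟨hbw, hb⟩ := hmemT b hbT
    obtain ⟨j, hj, hji, hperm⟩ := hwin _ b (List.getElem?_idxOf hbw) hb
    obtain ⟨ℓ, hiℓ, hℓj, hℓ⟩ := mem_take_drop_iff.1
      (hperm.subset (mem_take_iff_exists_getElem?_eq.2 ⟨0, hj, hx⟩))
    refine ⟨ℓ, Finset.mem_erase.2 ⟨by omega, Finset.mem_filter.2
      ⟨Finset.mem_range.2 (List.getElem?_eq_some_iff.1 hℓ).1, hℓ⟩⟩, by omega, ?_⟩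
    intro i' hi' hii'
    obtain ⟨b', hb'T, rfl⟩ := Finset.mem_image.1 hi'
    obtain ⟨hb'w, hb'⟩ := hmemT b' hb'T
    by_contra hle
    obtain ⟨m, hmj, hm⟩ := mem_take_iff_exists_getElem?_eq.1 (hperm.symm.subset
      (mem_take_drop_iff.2 ⟨_, by omega, by omega, List.getElem?_idxOf hb'w⟩))
    have := one_lt_count_of_getElem?_eq (by omega) hm (List.getElem?_idxOf hb'w)
    omega
  have hTU : T.card = U.card := (Finset.card_image_of_injOn fun b hb b' _ hbb' =>
    (List.idxOf_inj (hmemT b hb).1).1 hbb').symm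
  have h0X : 0 ∈ X :=
    Finset.mem_filter.2 ⟨Finset.mem_range.2 (List.getElem?_eq_some_iff.1 hx).1, hx⟩
  calc T.card + 1 = U.card + 1 := by rw [hTU]
    _ ≤ (X.erase 0).card + 1 := by grw [Finset.card_le_card_of_forall_exists_between hUX]
    _ = X.card := Finset.card_erase_add_one h0X
    _ ≤ w.count x := card_le_count_of_forall_getElem?_eq fun i hi => (Finset.mem_filter.1 hi).2

theorem exists_append_cons_forall_not_perm {w : List A}
    (h : w.length + 2 ≤ 2 * w.toFinset.card) :
    ∃ P a R, w = P ++ a :: R ∧ a ∉ P ∧ a ∉ R ∧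
      ∀ j, 0 < j → j ≤ P.length → j ≤ R.length → ¬ P.take j ~ R.take j := by
  by_contra hcon
  push Not at hcon
  obtain ⟨x, hx⟩ : ∃ x, w[0]? = some x := by
    cases w with
    | nil => simp at h
    | cons x w => exact ⟨x, rfl⟩
  suffices hwin : ∀ i b, w[i]? = some b → w.count b = 1 →
      ∃ j, 0 < j ∧ j ≤ i ∧ w.take j ~ (w.drop (i + 1)).take j by
    have := two_mul_card_toFinset_le (card_filter_count_eq_one_add_one_le_count hx hwin)
    omega
  intro i b hib hb
  have hsplit := take_append_cons_drop_of_getElem?_eq hib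
  have hcount := hb
  rw [← hsplit, List.count_append, List.count_cons_self] at hcount
  obtain ⟨j, hj, hji, -, hperm⟩ := hcon _ b _ hsplit.symm
    (List.count_eq_zero.1 (by omega)) (List.count_eq_zero.1 (by omega))
  rw [List.length_take, min_eq_left (List.getElem?_eq_some_iff.1 hib).1.le] at hji
  rw [List.take_take, min_eq_left hji] at hperm
  exact ⟨j, hj, hji, hperm⟩

end Combinatorics

theorem card_alph_le_of_lstar_eq_zero_general {K : Type*} [CommRing K] [Nontrivial K]
    {A : Type*} [DecidableEq A] (w : List A) (hw : lstar K w = 0) :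
    w.toFinset.card ≤ (w.length + 1) / 2 := by
  by_contra hcard
  obtain ⟨P, a, R, rfl, haP, haR, hperm⟩ := exists_append_cons_forall_not_perm (w := w) (by omega)
  have hshuffle : shuffleCount P R.reverse (R.reverse ++ P) = 1 := by
    refine shuffleCount_append_eq_one fun j hj hjP hjR h => hperm j hj hjP (by simpa using hjR) ?_
    rw [List.length_reverse, List.drop_reverse, Nat.sub_sub_self (by simpa using hjR)] at h
    exact h.trans (List.reverse_perm _)
  have hcoeff := coeff_lstar_append_cons_reverse (K := K) (Q := R.reverse) (R.reverse ++ P) haP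
    (by simpa using haR) (by simp [haP, haR])
  rw [List.reverse_reverse, hshuffle, hw] at hcoeff
  simp only [coeff_zero, Finsupp.coe_zero, Pi.zero_apply, Nat.cast_one, mul_one] at hcoeff
  exact ((isUnit_one.neg).pow P.length).ne_zero hcoeff.symm

/-- over any (nontrivial) commutative ring `K`, if `l*(w) = 0` then the
number of distinct letters of `w` is at most `⌈|w|/2⌉`. -/
theorem card_alph_le_of_lstar_eq_zero {K : Type*} [CommRing K] [Nontrivial K]
    {A : Type*} [Fintype A] [DecidableEq A] (w : List A) (hw : lstar K w = 0) :
    w.toFinset.card ≤ (w.length + 1) / 2 :=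
  card_alph_le_of_lstar_eq_zero_general w hw
end
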